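/- arXiv:2206.01515 — 5 statements merged into one kernel-verified Lean document; each statement's English description precedes it below -/
import Mathlib

section
/- Let D be a probability measure on α × Fin k, Q a probability measure on Θ, and g : Θ × α → Fin k a measurable classifier. Then the Gibbs risk satisfies R_D(Q) ≥ 1 − √(1 − AV(Q)), where AV(Q) is the algorithm decision boundary variability. (Theorem 1: lower bound on expected risk via algorithm DB variability.) -/
open MeasureTheory

/-- Indicator-style functions built from measurable maps into `Fin k` are measurable. -/
lemma meas_ind_aux {Z : Type*} [MeasurableSpace Z] {k : ℕ} (P : Fin k → Fin k → Prop)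
    [∀ a b, Decidable (P a b)] {u v : Z → Fin k} (hu : Measurable u) (hv : Measurable v) :
    Measurable fun z => if P (u z) (v z) then (1 : ℝ) else 0 := by
  apply Measurable.ite _ measurable_const measurable_const
  have : {z | P (u z) (v z)} = (fun z => (u z, v z)) ⁻¹' {q : Fin k × Fin k | P q.1 q.2} := rfl
  rw [this]
  exact (hu.prodMk hv) (Set.to_countable _).measurableSet

/-- A measurable function with values in `[0,1]` is integrable w.r.t. a finite measure. -/
lemma bdd01_integrable {X : Type*} [MeasurableSpace X] {μ : Measure X} [IsFiniteMeasure μ]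
    {f : X → ℝ} (hm : AEStronglyMeasurable f μ) (h0 : ∀ x, 0 ≤ f x) (h1 : ∀ x, f x ≤ 1) :
    Integrable f μ :=
  ⟨hm, HasFiniteIntegral.of_bounded (C := 1) (ae_of_all _ fun x => by
    rw [Real.norm_eq_abs, abs_of_nonneg (h0 x)]; exact h1 x)⟩

/-- Bounds on integrals of `[0,1]`-valued functions w.r.t. a probability measure. -/
lemma integral_bdd01 {X : Type*} [MeasurableSpace X] {μ : Measure X} [IsProbabilityMeasure μ]
    {f : X → ℝ} (hm : AEStronglyMeasurable f μ) (h0 : ∀ x, 0 ≤ f x) (h1 : ∀ x, f x ≤ 1) :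
    0 ≤ ∫ x, f x ∂μ ∧ ∫ x, f x ∂μ ≤ 1 := by
  refine ⟨integral_nonneg h0, ?_⟩
  calc ∫ x, f x ∂μ ≤ ∫ _x, (1 : ℝ) ∂μ :=
        integral_mono (bdd01_integrable hm h0 h1) (integrable_const 1) h1
    _ = 1 := by simp

/-- Theorem 1 (lower bound on expected risk via algorithm DB variability):
`R_D(Q) ≥ 1 − √(1 − AV(Q))`. -/
theorem gibbs_risk_lower_bound_of_algorithm_db_variability
    {α Θ : Type*} [MeasurableSpace α] [MeasurableSpace Θ]
    {k : ℕ} (hk : 2 ≤ k)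
    (D : Measure (α × Fin k)) [IsProbabilityMeasure D]
    (Q : Measure Θ) [IsProbabilityMeasure Q]
    (g : Θ × α → Fin k) (hg : Measurable g) :
    (∫ p, ∫ θ, (if g (θ, p.1) ≠ p.2 then (1 : ℝ) else 0) ∂Q ∂D) ≥
      1 - Real.sqrt (1 -
        ∫ p, ∫ θ, ∫ θ',
          (if g (θ, p.1) ≠ g (θ', p.1) then (1 : ℝ) else 0) ∂Q ∂Q ∂D) := by
  classical
  -- abbreviations
  set rf : α × Fin k → ℝ :=
    fun p => ∫ θ, (if g (θ, p.1) ≠ p.2 then (1 : ℝ) else 0) ∂Q with hrf_def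
  set Af : α × Fin k → ℝ :=
    fun p => ∫ θ, ∫ θ', (if g (θ, p.1) ≠ g (θ', p.1) then (1 : ℝ) else 0) ∂Q ∂Q with hAf_def
  set cf : α × Fin k → ℝ :=
    fun p => ∫ θ, (if g (θ, p.1) = p.2 then (1 : ℝ) else 0) ∂Q with hcf_def
  have hgx : ∀ xx : α, Measurable fun θ => g (θ, xx) := fun xx =>
    hg.comp (measurable_id.prodMk measurable_const)
  have hind0 : ∀ (P : Prop) [Decidable P], (0 : ℝ) ≤ (if P then (1:ℝ) else 0) := by
    intro P _; split_ifs <;> norm_num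
  have hind1 : ∀ (P : Prop) [Decidable P], (if P then (1:ℝ) else 0) ≤ 1 := by
    intro P _; split_ifs <;> norm_num
  -- measurability over p
  have hFr : Measurable fun q : (α × Fin k) × Θ =>
      if g (q.2, q.1.1) ≠ q.1.2 then (1 : ℝ) else 0 :=
    meas_ind_aux (fun a b => a ≠ b)
      (hg.comp (measurable_snd.prodMk measurable_fst.fst)) measurable_fst.snd
  have hrm : StronglyMeasurable rf := by
    have := hFr.stronglyMeasurable.integral_prod_right' (ν := Q)
    exact this
  have hFc : Measurable fun q : (α × Fin k) × Θ =>
      if g (q.2, q.1.1) = q.1.2 then (1 : ℝ) else 0 :=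
    meas_ind_aux (fun a b => a = b)
      (hg.comp (measurable_snd.prodMk measurable_fst.fst)) measurable_fst.snd
  have hcm : StronglyMeasurable cf := by
    have := hFc.stronglyMeasurable.integral_prod_right' (ν := Q)
    exact this
  have hG2 : Measurable fun q : ((α × Fin k) × Θ) × Θ =>
      if g (q.1.2, q.1.1.1) ≠ g (q.2, q.1.1.1) then (1 : ℝ) else 0 :=
    meas_ind_aux (fun a b => a ≠ b)
      (hg.comp (measurable_fst.snd.prodMk measurable_fst.fst.fst))
      (hg.comp (measurable_snd.prodMk measurable_fst.fst.fst))
  have hGm : StronglyMeasurable fun q : (α × Fin k) × Θ =>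
      ∫ θ', (if g (q.2, q.1.1) ≠ g (θ', q.1.1) then (1 : ℝ) else 0) ∂Q :=
    hG2.stronglyMeasurable.integral_prod_right'
  have hAm : StronglyMeasurable Af := hGm.integral_prod_right'
  -- inner-layer facts, for each p
  -- measurability over θ of inner double integrals (via factoring through Fin k)
  have hinnerA_meas : ∀ xx : α, Measurable fun θ =>
      ∫ θ', (if g (θ, xx) ≠ g (θ', xx) then (1 : ℝ) else 0) ∂Q := by
    intro xx
    have : (fun θ => ∫ θ', (if g (θ, xx) ≠ g (θ', xx) then (1 : ℝ) else 0) ∂Q)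
        = (fun j : Fin k => ∫ θ', (if j ≠ g (θ', xx) then (1 : ℝ) else 0) ∂Q)
          ∘ (fun θ => g (θ, xx)) := rfl
    rw [this]
    exact (measurable_of_countable _).comp (hgx xx)
  have hinnerB_meas : ∀ xx : α, Measurable fun θ =>
      ∫ θ', (if g (θ, xx) = g (θ', xx) then (1 : ℝ) else 0) ∂Q := by
    intro xx
    have : (fun θ => ∫ θ', (if g (θ, xx) = g (θ', xx) then (1 : ℝ) else 0) ∂Q)
        = (fun j : Fin k => ∫ θ', (if j = g (θ', xx) then (1 : ℝ) else 0) ∂Q)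
          ∘ (fun θ => g (θ, xx)) := rfl
    rw [this]
    exact (measurable_of_countable _).comp (hgx xx)
  -- integrability of indicator-style functions of θ'
  have hint_ne' : ∀ (xx : α) (j : Fin k),
      Integrable (fun θ' => if j ≠ g (θ', xx) then (1 : ℝ) else 0) Q := fun xx j =>
    bdd01_integrable
      (meas_ind_aux (fun a b => a ≠ b) measurable_const (hgx xx)).aestronglyMeasurable
      (fun _ => hind0 _) (fun _ => hind1 _)
  have hint_eq' : ∀ (xx : α) (j : Fin k),
      Integrable (fun θ' => if j = g (θ', xx) then (1 : ℝ) else 0) Q := fun xx j =>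
    bdd01_integrable
      (meas_ind_aux (fun a b => a = b) measurable_const (hgx xx)).aestronglyMeasurable
      (fun _ => hind0 _) (fun _ => hind1 _)
  -- the two key pointwise (in p) statements
  have hcf_bounds : ∀ p : α × Fin k, 0 ≤ cf p ∧ cf p ≤ 1 := by
    intro p
    exact integral_bdd01
      (meas_ind_aux (fun a b => a = b) (hgx p.1) measurable_const).aestronglyMeasurable
      (fun _ => hind0 _) (fun _ => hind1 _)
  have hrc : ∀ p : α × Fin k, rf p = 1 - cf p := by
    intro p
    have hadd : rf p + cf p = 1 := by
      rw [hrf_def, hcf_def]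
      rw [← integral_add
        (bdd01_integrable
          (meas_ind_aux (fun a b => a ≠ b) (hgx p.1) measurable_const).aestronglyMeasurable
          (fun _ => hind0 _) (fun _ => hind1 _))
        (bdd01_integrable
          (meas_ind_aux (fun a b => a = b) (hgx p.1) measurable_const).aestronglyMeasurable
          (fun _ => hind0 _) (fun _ => hind1 _))]
      have : ∀ θ, ((if g (θ, p.1) ≠ p.2 then (1 : ℝ) else 0)
          + (if g (θ, p.1) = p.2 then (1 : ℝ) else 0)) = 1 := by
        intro θ; by_cases h : g (θ, p.1) = p.2 <;> simp [h]
      rw [integral_congr_ae (ae_of_all _ this)]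
      simp
    linarith
  -- inner double integral identity: Af p = 1 - Bf p
  have hABp : ∀ p : α × Fin k,
      Af p = 1 - ∫ θ, ∫ θ', (if g (θ, p.1) = g (θ', p.1) then (1 : ℝ) else 0) ∂Q ∂Q := by
    intro p
    have hadd : Af p + (∫ θ, ∫ θ', (if g (θ, p.1) = g (θ', p.1) then (1 : ℝ) else 0) ∂Q ∂Q)
        = 1 := by
      rw [hAf_def]
      rw [← integral_add
        (bdd01_integrable (hinnerA_meas p.1).aestronglyMeasurable
          (fun θ => (integral_bdd01 (hint_ne' p.1 (g (θ, p.1))).1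
            (fun _ => hind0 _) (fun _ => hind1 _)).1)
          (fun θ => (integral_bdd01 (hint_ne' p.1 (g (θ, p.1))).1
            (fun _ => hind0 _) (fun _ => hind1 _)).2))
        (bdd01_integrable (hinnerB_meas p.1).aestronglyMeasurable
          (fun θ => (integral_bdd01 (hint_eq' p.1 (g (θ, p.1))).1
            (fun _ => hind0 _) (fun _ => hind1 _)).1)
          (fun θ => (integral_bdd01 (hint_eq' p.1 (g (θ, p.1))).1
            (fun _ => hind0 _) (fun _ => hind1 _)).2))]
      have : ∀ θ, ((∫ θ', (if g (θ, p.1) ≠ g (θ', p.1) then (1 : ℝ) else 0) ∂Q)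
          + ∫ θ', (if g (θ, p.1) = g (θ', p.1) then (1 : ℝ) else 0) ∂Q) = 1 := by
        intro θ
        rw [← integral_add (hint_ne' p.1 (g (θ, p.1))) (hint_eq' p.1 (g (θ, p.1)))]
        have : ∀ θ', ((if g (θ, p.1) ≠ g (θ', p.1) then (1 : ℝ) else 0)
            + (if g (θ, p.1) = g (θ', p.1) then (1 : ℝ) else 0)) = 1 := by
          intro θ'; by_cases h : g (θ, p.1) = g (θ', p.1) <;> simp [h]
        rw [integral_congr_ae (ae_of_all _ this)]
        simp
      rw [integral_congr_ae (ae_of_all _ this)]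
      simp
    linarith
  -- key inequality: (cf p)^2 ≤ Bf p
  have hkey : ∀ p : α × Fin k,
      (cf p) ^ 2 ≤ ∫ θ, ∫ θ', (if g (θ, p.1) = g (θ', p.1) then (1 : ℝ) else 0) ∂Q ∂Q := by
    intro p
    obtain ⟨hc0, hc1⟩ := hcf_bounds p
    have hsq : (cf p) ^ 2
        = ∫ θ, (if g (θ, p.1) = p.2 then (1 : ℝ) else 0) * cf p ∂Q := by
      rw [sq]; exact (integral_mul_const (cf p) _).symm
    rw [hsq]
    apply integral_mono
    · exact bdd01_integrable
        ((meas_ind_aux (fun a b => a = b) (hgx p.1) measurable_const).mul_const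
          (cf p)).aestronglyMeasurable
        (fun θ => mul_nonneg (hind0 _) hc0)
        (fun θ => by
          calc (if g (θ, p.1) = p.2 then (1:ℝ) else 0) * cf p ≤ 1 * 1 :=
                mul_le_mul (hind1 _) hc1 hc0 zero_le_one
            _ = 1 := by ring)
    · exact bdd01_integrable (hinnerB_meas p.1).aestronglyMeasurable
        (fun θ => (integral_bdd01 (hint_eq' p.1 (g (θ, p.1))).1
          (fun _ => hind0 _) (fun _ => hind1 _)).1)
        (fun θ => (integral_bdd01 (hint_eq' p.1 (g (θ, p.1))).1
          (fun _ => hind0 _) (fun _ => hind1 _)).2)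
    · intro θ
      show (if g (θ, p.1) = p.2 then (1 : ℝ) else 0) * cf p
          ≤ ∫ θ', (if g (θ, p.1) = g (θ', p.1) then (1 : ℝ) else 0) ∂Q
      by_cases h : g (θ, p.1) = p.2
      · have heq : (∫ θ', (if g (θ, p.1) = g (θ', p.1) then (1 : ℝ) else 0) ∂Q) = cf p := by
          refine integral_congr_ae (ae_of_all _ fun θ' => ?_)
          show (if g (θ, p.1) = g (θ', p.1) then (1 : ℝ) else 0)
              = if g (θ', p.1) = p.2 then (1 : ℝ) else 0
          by_cases h' : g (θ', p.1) = p.2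
          · rw [if_pos (h.trans h'.symm), if_pos h']
          · rw [if_neg (fun hh => h' (hh.symm.trans h)), if_neg h']
        rw [heq, if_pos h, one_mul]
      · rw [if_neg h, zero_mul]
        exact integral_nonneg fun _ => hind0 _
  -- pointwise bound: 1 - √(1 - Af p) ≤ rf p, plus bounds on Af
  have hAf_bounds : ∀ p : α × Fin k, 0 ≤ Af p ∧ Af p ≤ 1 := by
    intro p
    rw [hAf_def]
    exact integral_bdd01 (hinnerA_meas p.1).aestronglyMeasurable
      (fun θ => (integral_bdd01 (hint_ne' p.1 (g (θ, p.1))).1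
        (fun _ => hind0 _) (fun _ => hind1 _)).1)
      (fun θ => (integral_bdd01 (hint_ne' p.1 (g (θ, p.1))).1
        (fun _ => hind0 _) (fun _ => hind1 _)).2)
  have hpoint : ∀ p : α × Fin k, 1 - Real.sqrt (1 - Af p) ≤ rf p := by
    intro p
    obtain ⟨hc0, _⟩ := hcf_bounds p
    have h1 : (cf p) ^ 2 ≤ 1 - Af p := by
      have := hkey p; have := hABp p; linarith
    have h2 : cf p ≤ Real.sqrt (1 - Af p) := by
      calc cf p = Real.sqrt ((cf p) ^ 2) := (Real.sqrt_sq hc0).symm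
        _ ≤ Real.sqrt (1 - Af p) := Real.sqrt_le_sqrt h1
    rw [hrc p]; linarith
  -- integrability over D
  have hrf_bounds : ∀ p : α × Fin k, 0 ≤ rf p ∧ rf p ≤ 1 := by
    intro p
    exact integral_bdd01
      (meas_ind_aux (fun a b => a ≠ b) (hgx p.1) measurable_const).aestronglyMeasurable
      (fun _ => hind0 _) (fun _ => hind1 _)
  have hint_rf : Integrable rf D :=
    bdd01_integrable hrm.aestronglyMeasurable (fun p => (hrf_bounds p).1)
      (fun p => (hrf_bounds p).2)
  have hsqrt_meas : StronglyMeasurable fun p => Real.sqrt (1 - Af p) :=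
    (Real.continuous_sqrt.measurable.comp
      (measurable_const.sub hAm.measurable)).stronglyMeasurable
  have hsqrt_bounds : ∀ p : α × Fin k,
      0 ≤ Real.sqrt (1 - Af p) ∧ Real.sqrt (1 - Af p) ≤ 1 := fun p =>
    ⟨Real.sqrt_nonneg _, Real.sqrt_le_one.mpr (by linarith [(hAf_bounds p).1])⟩
  have hint_sqrt : Integrable (fun p => Real.sqrt (1 - Af p)) D :=
    bdd01_integrable hsqrt_meas.aestronglyMeasurable (fun p => (hsqrt_bounds p).1)
      (fun p => (hsqrt_bounds p).2)
  have hint_Af : Integrable Af D :=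
    bdd01_integrable hAm.aestronglyMeasurable (fun p => (hAf_bounds p).1)
      (fun p => (hAf_bounds p).2)
  have hint_oneSubA : Integrable (fun p => 1 - Af p) D := (integrable_const 1).sub hint_Af
  -- chain of inequalities
  have h1 : ∫ p, (1 - Real.sqrt (1 - Af p)) ∂D ≤ ∫ p, rf p ∂D :=
    integral_mono ((integrable_const 1).sub hint_sqrt) hint_rf hpoint
  have h2 : ∫ p, (1 - Real.sqrt (1 - Af p)) ∂D
      = 1 - ∫ p, Real.sqrt (1 - Af p) ∂D := by
    rw [integral_sub (integrable_const 1) hint_sqrt, integral_const]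
    simp
  have h3 : ∫ p, Real.sqrt (1 - Af p) ∂D ≤ Real.sqrt (∫ p, (1 - Af p) ∂D) := by
    have := (Real.strictConcaveOn_sqrt.concaveOn).le_map_integral
      (f := fun p => 1 - Af p) (μ := D)
      Real.continuous_sqrt.continuousOn isClosed_Ici
      (ae_of_all _ fun p => by
        simp only [Set.mem_Ici]; linarith [(hAf_bounds p).2])
      hint_oneSubA (by exact hint_sqrt)
    exact this
  have h4 : ∫ p, (1 - Af p) ∂D = 1 - ∫ p, Af p ∂D := by
    rw [integral_sub (integrable_const 1) hint_Af, integral_const]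
    simp
  rw [h4] at h3
  rw [ge_iff_le]
  linarith [h1, h2.symm.le]
end

section
/- Let D be a probability measure on α × Fin k, Q a probability measure on Θ, and g : Θ × α → Fin k a measurable classifier. Then AV(Q) ≤ 2·R_D(Q) − R_D(Q)², i.e., the algorithm decision boundary variability is at most twice the Gibbs risk minus the Gibbs risk squared. (Key inequality in the proof of Theorem 1.) -/
/-!
If two classifiers disagree at `x`, at least one of them errs on `(x, y)`, so
`1[g θ x ≠ g θ' x] ≤ 1 - (1 - e θ) (1 - e θ')` with `e` the error indicator at `(x, y)`.
Integrating over independent `θ, θ' ~ Q` bounds the disagreement at `(x, y)` by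
`1 - (1 - r)² = 2 r - r²`, where `r` is the Gibbs risk at `(x, y)`. As `t ↦ 2 t - t²` is concave,
Jensen's inequality (nonnegativity of the variance of `r` under `D`) carries this over to the
integral against `D`.
-/

open MeasureTheory ProbabilityTheory

section

variable {β : Type*} [DecidableEq β]

lemma ite_ne_le_add_sub_mul (a b y : β) :
    (if a ≠ b then (1 : ℝ) else 0) ≤
      (if a ≠ y then 1 else 0) + (if b ≠ y then 1 else 0) -
        (if a ≠ y then 1 else 0) * (if b ≠ y then 1 else 0) := by
  by_cases ha : a = y <;> by_cases hb : b = y <;> by_cases hab : a = b <;> simp_all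

lemma norm_ite_one_zero_le (p : Prop) [Decidable p] : ‖if p then (1 : ℝ) else 0‖ ≤ 1 := by
  split_ifs <;> simp

variable {Ω : Type*} [MeasurableSpace Ω] [MeasurableSpace β] [MeasurableEq β]

lemma Measurable.ite_ne_one_zero {f g : Ω → β} (hf : Measurable f) (hg : Measurable g) :
    Measurable fun ω => if f ω ≠ g ω then (1 : ℝ) else 0 :=
  Measurable.ite (measurableSet_eq_fun hf hg).compl measurable_const measurable_const

end

section

variable {Ω : Type*} [MeasurableSpace Ω] {μ : Measure Ω} [IsProbabilityMeasure μ]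

lemma integral_const_mul_add_const {e : Ω → ℝ} (he : Integrable e μ) (a b : ℝ) :
    ∫ ω, (a * e ω + b) ∂μ = a * ∫ ω, e ω ∂μ + b := by
  rw [integral_add (he.const_mul a) (integrable_const b), integral_const_mul]
  simp

lemma integral_two_mul_sub_sq_le {r : Ω → ℝ} (hr : MemLp r 2 μ) :
    ∫ ω, (2 * r ω - r ω ^ 2) ∂μ ≤ 2 * ∫ ω, r ω ∂μ - (∫ ω, r ω ∂μ) ^ 2 := by
  have hvar := variance_eq_sub hr
  rw [integral_sub ((hr.integrable one_le_two).const_mul 2) hr.integrable_sq,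
    integral_const_mul]
  have := variance_nonneg r μ
  simp only [Pi.pow_apply] at hvar
  linarith

end

section

variable {Θ β : Type*} [MeasurableSpace Θ] [MeasurableSpace β] [MeasurableEq β]
  [DecidableEq β] {Q : Measure Θ} [IsProbabilityMeasure Q]

lemma integral_integral_ite_ne_le {f : Θ → β} (hf : Measurable f) (y : β) :
    ∫ θ, ∫ θ', (if f θ ≠ f θ' then (1 : ℝ) else 0) ∂Q ∂Q ≤
      2 * (∫ θ, (if f θ ≠ y then (1 : ℝ) else 0) ∂Q) -
        (∫ θ, (if f θ ≠ y then (1 : ℝ) else 0) ∂Q) ^ 2 := by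
  set e : Θ → ℝ := fun θ => if f θ ≠ y then 1 else 0
  set r := ∫ θ, e θ ∂Q
  have he : Integrable e Q :=
    .of_bound (hf.ite_ne_one_zero measurable_const).aestronglyMeasurable 1
      (.of_forall fun _ => norm_ite_one_zero_le _)
  have inner (θ : Θ) : ∫ θ', (if f θ ≠ f θ' then (1 : ℝ) else 0) ∂Q ≤ (1 - e θ) * r + e θ :=
    calc _ ≤ ∫ θ', ((1 - e θ) * e θ' + e θ) ∂Q :=
          integral_mono_of_nonneg (.of_forall fun _ => by positivity)
            ((he.const_mul _).add (integrable_const _))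
            (.of_forall fun θ' => (ite_ne_le_add_sub_mul (f θ) (f θ') y).trans_eq (by ring))
      _ = _ := integral_const_mul_add_const he _ _
  calc _ ≤ ∫ θ, ((1 - r) * e θ + r) ∂Q :=
        integral_mono_of_nonneg (.of_forall fun _ => integral_nonneg fun _ => by positivity)
          ((he.const_mul _).add (integrable_const _))
          (.of_forall fun θ => (inner θ).trans_eq (by ring))
    _ = 2 * r - r ^ 2 := by rw [integral_const_mul_add_const he]; ring

end

theorem algorithm_db_variability_le_two_risk_sub_risk_sq_general
    {α Θ : Type*} [MeasurableSpace α] [MeasurableSpace Θ]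
    {k : ℕ}
    (D : Measure (α × Fin k)) [IsProbabilityMeasure D]
    (Q : Measure Θ) [IsProbabilityMeasure Q]
    (g : Θ × α → Fin k) (hg : Measurable g) :
    (∫ p, ∫ θ, ∫ θ',
        (if g (θ, p.1) ≠ g (θ', p.1) then (1 : ℝ) else 0) ∂Q ∂Q ∂D) ≤
      2 * (∫ p, ∫ θ, (if g (θ, p.1) ≠ p.2 then (1 : ℝ) else 0) ∂Q ∂D) -
        (∫ p, ∫ θ, (if g (θ, p.1) ≠ p.2 then (1 : ℝ) else 0) ∂Q ∂D) ^ 2 := by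
  set r : α × Fin k → ℝ := fun p => ∫ θ, (if g (θ, p.1) ≠ p.2 then (1 : ℝ) else 0) ∂Q
  have hr : MemLp r 2 D := by
    have hmeas : Measurable fun q : (α × Fin k) × Θ =>
        if g (q.2, q.1.1) ≠ q.1.2 then (1 : ℝ) else 0 :=
      (hg.comp (measurable_snd.prodMk measurable_fst.fst)).ite_ne_one_zero measurable_fst.snd
    refine .of_bound hmeas.stronglyMeasurable.integral_prod_right'.aestronglyMeasurable 1
      (.of_forall fun _ => ?_)
    simpa using norm_integral_le_of_norm_le_const (μ := Q)
      (.of_forall fun _ => norm_ite_one_zero_le _)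
  calc _ ≤ ∫ p, (2 * r p - r p ^ 2) ∂D :=
        integral_mono_of_nonneg
          (.of_forall fun _ => integral_nonneg fun _ => integral_nonneg fun _ => by positivity)
          (((hr.integrable one_le_two).const_mul 2).sub hr.integrable_sq)
          (.of_forall fun p => integral_integral_ite_ne_le (hg.comp measurable_prodMk_right) p.2)
    _ ≤ _ := integral_two_mul_sub_sq_le hr

/-- Key inequality in the proof of Theorem 1: `AV(Q) ≤ 2·R_D(Q) − R_D(Q)²`. -/
theorem algorithm_db_variability_le_two_risk_sub_risk_sq
    {α Θ : Type*} [MeasurableSpace α] [MeasurableSpace Θ]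
    {k : ℕ} (hk : 2 ≤ k)
    (D : Measure (α × Fin k)) [IsProbabilityMeasure D]
    (Q : Measure Θ) [IsProbabilityMeasure Q]
    (g : Θ × α → Fin k) (hg : Measurable g) :
    (∫ p, ∫ θ, ∫ θ',
        (if g (θ, p.1) ≠ g (θ', p.1) then (1 : ℝ) else 0) ∂Q ∂Q ∂D) ≤
      2 * (∫ p, ∫ θ, (if g (θ, p.1) ≠ p.2 then (1 : ℝ) else 0) ∂Q ∂D) -
        (∫ p, ∫ θ, (if g (θ, p.1) ≠ p.2 then (1 : ℝ) else 0) ∂Q ∂D) ^ 2 :=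
  algorithm_db_variability_le_two_risk_sub_risk_sq_general D Q g hg
end

section
/- Let D be a probability measure on α × Bool (binary classification, k = 2), Q a probability measure on Θ, and g : Θ × α → Bool a measurable classifier. If the Gibbs risk satisfies R_D(Q) ≤ 1/2, then R_D(Q) ≥ (1 − √(1 − 2·AV(Q)))/2. (Theorem 2: tighter lower bound on expected risk for the binary case.) -/
open MeasureTheory

/-! At a point `(x, y)` let `p` be the `Q`-probability that `g (·, x)` misclassifies it. Since
predictions are binary, two independent draws from `Q` disagree at `x` with probability
`2 p (1 - p)`. Averaging over `D` gives `AV = 2 R - 2 E[p²] ≤ 2 R - 2 R²` (the variance of `p`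
is nonnegative), that is `(1 - 2 R)² ≤ 1 - 2 AV`, and `1 - 2 R ≤ |1 - 2 R| ≤ √(1 - 2 AV)`. -/

theorem integral_ite_eq_mul_measureReal {Θ : Type*} [MeasurableSpace Θ] {μ : Measure Θ}
    [IsProbabilityMeasure μ] {P : Θ → Prop} [DecidablePred P] (hP : MeasurableSet {θ | P θ})
    (a b : ℝ) :
    ∫ θ, (if P θ then a else b) ∂μ = a * μ.real {θ | P θ} + b * (1 - μ.real {θ | P θ}) := by
  have hsplit : ∀ θ, (if P θ then a else b) =
      {θ | P θ}.indicator (fun _ => a) θ + {θ | P θ}ᶜ.indicator (fun _ => b) θ := by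
    intro θ; by_cases h : P θ <;> simp [h]
  rw [integral_congr_ae (.of_forall hsplit), integral_add ((integrable_const a).indicator hP)
    ((integrable_const b).indicator hP.compl), integral_indicator_const _ hP,
    integral_indicator_const _ hP.compl, probReal_compl_eq_one_sub hP, smul_eq_mul,
    smul_eq_mul, mul_comm, mul_comm (1 - _)]

theorem integral_integral_ite_ne_eq_two_mul_mul_one_sub {Θ : Type*} [MeasurableSpace Θ]
    {μ : Measure Θ} [IsProbabilityMeasure μ] {h : Θ → Bool} (hh : Measurable h) (y : Bool) :
    ∫ θ, ∫ θ', (if h θ ≠ h θ' then (1 : ℝ) else 0) ∂μ ∂μ =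
      2 * μ.real {θ | h θ ≠ y} * (1 - μ.real {θ | h θ ≠ y}) := by
  set p := μ.real {θ | h θ ≠ y}
  have hmeas : MeasurableSet {θ | h θ ≠ y} := hh (measurableSet_singleton y).compl
  have hinner : ∀ θ, ∫ θ', (if h θ ≠ h θ' then (1 : ℝ) else 0) ∂μ =
      if h θ ≠ y then 1 - p else p := by
    intro θ
    have hflip : ∀ θ', (if h θ ≠ h θ' then (1 : ℝ) else 0) =
        if h θ' ≠ y then (if h θ ≠ y then 0 else 1) else (if h θ ≠ y then 1 else 0) := by
      intro θ'
      cases h θ <;> cases h θ' <;> cases y <;> simp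
    simp_rw [hflip, integral_ite_eq_mul_measureReal hmeas]
    split_ifs <;> ring
  simp_rw [hinner, integral_ite_eq_mul_measureReal hmeas]
  ring

theorem sq_one_sub_two_mul_integral_le {Ω : Type*} [MeasurableSpace Ω] {μ : Measure Ω}
    [IsProbabilityMeasure μ] {f : Ω → ℝ} (hf : MemLp f 2 μ) :
    (1 - 2 * ∫ ω, f ω ∂μ) ^ 2 ≤ 1 - 2 * ∫ ω, 2 * f ω * (1 - f ω) ∂μ := by
  have hint : Integrable f μ := hf.integrable one_le_two
  have hexpand : ∫ ω, 2 * f ω * (1 - f ω) ∂μ = 2 * ∫ ω, f ω ∂μ - 2 * ∫ ω, f ω ^ 2 ∂μ := by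
    simp_rw [show ∀ ω, 2 * f ω * (1 - f ω) = 2 * f ω - 2 * f ω ^ 2 from fun ω => by ring]
    rw [integral_sub (hint.const_mul 2) (hf.integrable_sq.const_mul 2), integral_const_mul,
      integral_const_mul]
  have hvar : 0 ≤ ∫ ω, f ω ^ 2 ∂μ - (∫ ω, f ω ∂μ) ^ 2 := by
    simpa [ProbabilityTheory.variance_eq_sub hf] using ProbabilityTheory.variance_nonneg f μ
  rw [hexpand]
  nlinarith

theorem measurable_measureReal_setOf_ne {α Θ : Type*} [MeasurableSpace α] [MeasurableSpace Θ]
    (Q : Measure Θ) [SFinite Q] {g : Θ × α → Bool} (hg : Measurable g) :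
    Measurable fun q : α × Bool => Q.real {θ | g (θ, q.1) ≠ q.2} := by
  have hset : MeasurableSet {r : (α × Bool) × Θ | g (r.2, r.1.1) ≠ r.1.2} :=
    (measurableSet_eq_fun (hg.comp (measurable_snd.prodMk measurable_fst.fst))
      measurable_fst.snd).compl
  exact (measurable_measure_prodMk_left hset).ennreal_toReal

theorem gibbs_risk_lower_bound_binary_of_algorithm_db_variability_general
    {α Θ : Type*} [MeasurableSpace α] [MeasurableSpace Θ]
    (D : Measure (α × Bool)) [IsProbabilityMeasure D]
    (Q : Measure Θ) [IsProbabilityMeasure Q]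
    (g : Θ × α → Bool) (hg : Measurable g) :
    (∫ p, ∫ θ, (if g (θ, p.1) ≠ p.2 then (1 : ℝ) else 0) ∂Q ∂D) ≥
      (1 - Real.sqrt (1 - 2 *
        ∫ p, ∫ θ, ∫ θ',
          (if g (θ, p.1) ≠ g (θ', p.1) then (1 : ℝ) else 0) ∂Q ∂Q ∂D)) / 2 := by
  set risk : α × Bool → ℝ := fun q => Q.real {θ | g (θ, q.1) ≠ q.2}
  have hsection : ∀ x, Measurable fun θ => g (θ, x) := fun x => hg.comp measurable_prodMk_right
  have hrisk : ∀ q : α × Bool,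
      ∫ θ, (if g (θ, q.1) ≠ q.2 then (1 : ℝ) else 0) ∂Q = risk q := fun q => by
    have hmeas : MeasurableSet {θ | g (θ, q.1) ≠ q.2} :=
      hsection q.1 (measurableSet_singleton q.2).compl
    rw [integral_ite_eq_mul_measureReal hmeas]
    ring
  have hvariability : ∀ q : α × Bool,
      ∫ θ, ∫ θ', (if g (θ, q.1) ≠ g (θ', q.1) then (1 : ℝ) else 0) ∂Q ∂Q =
        2 * risk q * (1 - risk q) := fun q =>
    integral_integral_ite_ne_eq_two_mul_mul_one_sub (hsection q.1) q.2
  have hmemLp : MemLp risk 2 D :=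
    .of_bound (measurable_measureReal_setOf_ne Q hg).aestronglyMeasurable 1 <|
      .of_forall fun q => by
        rw [Real.norm_eq_abs, abs_of_nonneg measureReal_nonneg]; exact measureReal_le_one
  simp_rw [hrisk, hvariability]
  have hsqrt := Real.abs_le_sqrt (sq_one_sub_two_mul_integral_le hmemLp)
  linarith [le_abs_self (1 - 2 * ∫ q, risk q ∂D)]

/-- Theorem 2 (tighter lower bound on expected risk for the binary case):
if `R_D(Q) ≤ 1/2` then `R_D(Q) ≥ (1 − √(1 − 2·AV(Q)))/2`. -/
theorem gibbs_risk_lower_bound_binary_of_algorithm_db_variability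
    {α Θ : Type*} [MeasurableSpace α] [MeasurableSpace Θ]
    (D : Measure (α × Bool)) [IsProbabilityMeasure D]
    (Q : Measure Θ) [IsProbabilityMeasure Q]
    (g : Θ × α → Bool) (hg : Measurable g)
    (hR : (∫ p, ∫ θ, (if g (θ, p.1) ≠ p.2 then (1 : ℝ) else 0) ∂Q ∂D) ≤ 1 / 2) :
    (∫ p, ∫ θ, (if g (θ, p.1) ≠ p.2 then (1 : ℝ) else 0) ∂Q ∂D) ≥
      (1 - Real.sqrt (1 - 2 *
        ∫ p, ∫ θ, ∫ θ',
          (if g (θ, p.1) ≠ g (θ', p.1) then (1 : ℝ) else 0) ∂Q ∂Q ∂D)) / 2 :=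
  gibbs_risk_lower_bound_binary_of_algorithm_db_variability_general D Q g hg
end

section
/- Let Q and Q' be probability measures on Θ, g : Θ × α → Fin k a measurable classifier, x ∈ α and y ∈ Fin k. If Q'{θ : g(θ,x) = y} ≥ Q'{θ : g(θ,x) = i} for every i ∈ Fin k (the label y is a Q'-majority prediction at x), then Q'{θ : g(θ,x) ≠ y} ≤ ∫_Θ ∫_Θ 1[g(θ,x) ≠ g(θ',x)] dQ'(θ') dQ(θ). (Pointwise majority-vote inequality in the proof of Lemma 2.) -/
open MeasureTheory

/-! Integrating out `θ'` turns the right-hand side into the average over `θ ~ Q` of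
`Q'{g(·,x) ≠ g(θ,x)} = 1 - Q'{g(·,x) = g(θ,x)}`, and by the majority assumption each such term
is at least `1 - Q'{g(·,x) = y} = Q'{g(·,x) ≠ y}`. -/

section

variable {Θ β : Type*} [MeasurableSpace Θ] [MeasurableSpace β] [MeasurableSingletonClass β]
  {μ : Measure Θ} {f : Θ → β}

lemma integral_ite_ne_eq_measureReal [DecidableEq β] (hf : Measurable f) (c : β) :
    ∫ θ, (if c ≠ f θ then (1 : ℝ) else 0) ∂μ = μ.real {θ | f θ ≠ c} := by
  have hset : MeasurableSet {θ | f θ ≠ c} := (hf (measurableSet_singleton c)).compl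
  rw [← integral_indicator_one hset]
  congr with θ
  simp only [Set.indicator_apply, Set.mem_ofPred_eq, Pi.one_apply, ne_comm]

lemma measureReal_ne_le_of_forall_measure_eq_le [IsProbabilityMeasure μ] (hf : Measurable f)
    {y : β} (hmaj : ∀ i, μ {θ | f θ = i} ≤ μ {θ | f θ = y}) (c : β) :
    μ.real {θ | f θ ≠ y} ≤ μ.real {θ | f θ ≠ c} := by
  have hcompl (b : β) : μ.real {θ | f θ ≠ b} = 1 - μ.real {θ | f θ = b} :=
    probReal_compl_eq_one_sub (hf (measurableSet_singleton b))
  have hc : μ.real {θ | f θ = c} ≤ μ.real {θ | f θ = y} :=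
    ENNReal.toReal_mono (measure_ne_top _ _) (hmaj c)
  rw [hcompl, hcompl]
  linarith

lemma integrable_measureReal_ne_comp [Countable β] [IsFiniteMeasure μ] (ν : Measure Θ)
    [IsFiniteMeasure ν] (hf : Measurable f) :
    Integrable (fun θ => μ.real {θ' | f θ' ≠ f θ}) ν := by
  have hmeas : Measurable fun θ => μ.real {θ' | f θ' ≠ f θ} :=
    (measurable_of_countable fun c => μ.real {θ' | f θ' ≠ c}).comp hf
  refine .of_bound hmeas.aestronglyMeasurable (μ.real Set.univ) (.of_forall fun θ => ?_)
  rw [Real.norm_of_nonneg measureReal_nonneg]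
  exact measureReal_mono (Set.subset_univ _)

lemma measureReal_ne_le_integral_measureReal_ne [Countable β] [IsProbabilityMeasure μ]
    (ν : Measure Θ) [IsProbabilityMeasure ν] (hf : Measurable f) {y : β}
    (hmaj : ∀ i, μ {θ | f θ = i} ≤ μ {θ | f θ = y}) :
    μ.real {θ | f θ ≠ y} ≤ ∫ θ, μ.real {θ' | f θ' ≠ f θ} ∂ν :=
  calc μ.real {θ | f θ ≠ y} = ∫ _, μ.real {θ | f θ ≠ y} ∂ν := by simp
    _ ≤ ∫ θ, μ.real {θ' | f θ' ≠ f θ} ∂ν :=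
      integral_mono (integrable_const _) (integrable_measureReal_ne_comp ν hf)
        fun θ => measureReal_ne_le_of_forall_measure_eq_le hf hmaj (f θ)

end

theorem majority_vote_pointwise_inequality_general
    {α Θ : Type*} [MeasurableSpace α] [MeasurableSpace Θ]
    {k : ℕ}
    (Q Q' : Measure Θ) [IsProbabilityMeasure Q] [IsProbabilityMeasure Q']
    (g : Θ × α → Fin k) (hg : Measurable g)
    (x : α) (y : Fin k)
    (hmaj : ∀ i : Fin k, Q' {θ | g (θ, x) = i} ≤ Q' {θ | g (θ, x) = y}) :
    (Q' {θ | g (θ, x) ≠ y}).toReal ≤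
      ∫ θ, ∫ θ', (if g (θ, x) ≠ g (θ', x) then (1 : ℝ) else 0) ∂Q' ∂Q := by
  have hf : Measurable fun θ => g (θ, x) := hg.comp (measurable_id.prodMk measurable_const)
  calc (Q' {θ | g (θ, x) ≠ y}).toReal ≤ ∫ θ, Q'.real {θ' | g (θ', x) ≠ g (θ, x)} ∂Q :=
        measureReal_ne_le_integral_measureReal_ne Q hf hmaj
    _ = _ := by
      congr with θ
      exact (integral_ite_ne_eq_measureReal hf _).symm

/-- Pointwise majority-vote inequality in the proof of Lemma 2: if `y` is a
`Q'`-majority prediction at `x`, then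
`Q'{θ : g(θ,x) ≠ y} ≤ ∫_Θ ∫_Θ 1[g(θ,x) ≠ g(θ',x)] dQ'(θ') dQ(θ)`. -/
theorem majority_vote_pointwise_inequality
    {α Θ : Type*} [MeasurableSpace α] [MeasurableSpace Θ]
    {k : ℕ} (hk : 2 ≤ k)
    (Q Q' : Measure Θ) [IsProbabilityMeasure Q] [IsProbabilityMeasure Q']
    (g : Θ × α → Fin k) (hg : Measurable g)
    (x : α) (y : Fin k)
    (hmaj : ∀ i : Fin k, Q' {θ | g (θ, x) = i} ≤ Q' {θ | g (θ, x) = y}) :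
    (Q' {θ | g (θ, x) ≠ y}).toReal ≤
      ∫ θ, ∫ θ', (if g (θ, x) ≠ g (θ', x) then (1 : ℝ) else 0) ∂Q' ∂Q :=
  majority_vote_pointwise_inequality_general Q Q' g hg x y hmaj
end

section
/- Let ν be a probability measure on α × Fin k, and let Q, Q' be probability measures on Θ with g : Θ × α → Fin k a measurable classifier. Suppose that for ν-almost every (x,y), Q'{θ : g(θ,x) = y} = max_{i ∈ Fin k} Q'{θ : g(θ,x) = i}. Then the Gibbs risk of Q' under ν is bounded by the disagreement: ∫_{α×Fin k} ∫_Θ 1[g(θ',x) ≠ y] dQ'(θ') dν(x,y) ≤ ∫_{α×Fin k} ∫_Θ ∫_Θ 1[g(θ,x) ≠ g(θ',x)] dQ'(θ') dQ(θ) dν(x,y). (First part of the proof of Lemma 2: the risk of the subset-trained posterior on the well-classified distribution D₁ is at most the decision boundary disagreement.) -/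
/-!
Pointwise in `(x, y)`, the Gibbs risk is `1 - Q'{θ' | g (θ', x) = y}`, while the disagreement is
the `Q`-average over `θ` of `1 - Q'{θ' | g (θ', x) = g (θ, x)}`. Since `y` is a majority label,
every `Q'{θ' | g (θ', x) = c}` is at most `Q'{θ' | g (θ', x) = y}`; integrate over `ν`.
-/

open MeasureTheory

section Indicator

variable {X : Type*} [MeasurableSpace X] {μ : Measure X} {P : X → Prop} [DecidablePred P]

lemma integral_ite_one_zero (hP : MeasurableSet {x | P x}) :
    ∫ x, (if P x then (1 : ℝ) else 0) ∂μ = μ.real {x | P x} := by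
  rw [← integral_indicator_one hP]
  simp only [Set.indicator_apply, Set.mem_ofPred_eq, Pi.one_apply]

lemma integrable_ite_one_zero [IsFiniteMeasure μ] (hP : MeasurableSet {x | P x}) :
    Integrable (fun x => if P x then (1 : ℝ) else 0) μ :=
  ((integrable_const (1 : ℝ)).indicator hP).congr
    (ae_of_all _ fun x => by simp only [Set.indicator_apply, Set.mem_ofPred_eq])

end Indicator

section Majority

variable {Θ ι : Type*} [MeasurableSpace Θ] [MeasurableSpace ι]
  {μ : Measure Θ} [IsProbabilityMeasure μ] {f : Θ → ι} {y : ι}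

lemma measureReal_ne_le_of_eq_iSup [MeasurableSingletonClass ι] (hf : Measurable f)
    (hy : μ {θ | f θ = y} = ⨆ i, μ {θ | f θ = i}) (c : ι) :
    μ.real {θ | f θ ≠ y} ≤ μ.real {θ | c ≠ f θ} := by
  have hcy : μ.real {θ | f θ = c} ≤ μ.real {θ | f θ = y} :=
    ENNReal.toReal_mono (measure_ne_top _ _) (hy ▸ le_iSup (fun i => μ {θ | f θ = i}) c)
  have hc : {θ | c ≠ f θ} = {θ | f θ = c}ᶜ := by ext; simp [eq_comm]
  rw [hc, ← Set.compl_ofPred,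
    probReal_compl_eq_one_sub (s := {θ | f θ = y}) (hf (measurableSet_singleton y)),
    probReal_compl_eq_one_sub (s := {θ | f θ = c}) (hf (measurableSet_singleton c))]
  linarith

lemma integral_ne_le_integral_integral_ne_of_eq_iSup [MeasurableEq ι] [DecidableEq ι]
    (Q : Measure Θ) [IsProbabilityMeasure Q]
    (hf : Measurable f) (hy : μ {θ | f θ = y} = ⨆ i, μ {θ | f θ = i}) :
    ∫ θ', (if f θ' ≠ y then (1 : ℝ) else 0) ∂μ ≤
      ∫ θ, ∫ θ', (if f θ ≠ f θ' then (1 : ℝ) else 0) ∂μ ∂Q := by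
  have hdis : Integrable (fun θ => ∫ θ', (if f θ ≠ f θ' then (1 : ℝ) else 0) ∂μ) Q :=
    (integrable_ite_one_zero (μ := Q.prod μ) (P := fun q => f q.1 ≠ f q.2)
      (measurableSet_eq_fun (hf.comp measurable_fst)
        (hf.comp measurable_snd)).compl).integral_prod_left
  calc ∫ θ', (if f θ' ≠ y then (1 : ℝ) else 0) ∂μ
      = ∫ _θ, μ.real {θ' | f θ' ≠ y} ∂Q := by
        rw [integral_ite_one_zero (P := (f · ≠ y)) (hf (measurableSet_singleton y)).compl,
          integral_const, probReal_univ, one_smul]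
    _ ≤ _ := integral_mono (integrable_const _) hdis fun θ => by
        rw [integral_ite_one_zero (P := (f θ ≠ f ·))
          (measurableSet_eq_fun measurable_const hf).compl]
        exact measureReal_ne_le_of_eq_iSup hf hy (f θ)

end Majority

theorem gibbs_risk_le_disagreement_of_ae_majority_general
    {α Θ : Type*} [MeasurableSpace α] [MeasurableSpace Θ]
    {k : ℕ}
    (ν : Measure (α × Fin k)) [IsProbabilityMeasure ν]
    (Q Q' : Measure Θ) [IsProbabilityMeasure Q] [IsProbabilityMeasure Q']
    (g : Θ × α → Fin k) (hg : Measurable g)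
    (hmaj : ∀ᵐ p ∂ν,
      Q' {θ | g (θ, p.1) = p.2} = ⨆ i : Fin k, Q' {θ | g (θ, p.1) = i}) :
    (∫ p, ∫ θ', (if g (θ', p.1) ≠ p.2 then (1 : ℝ) else 0) ∂Q' ∂ν) ≤
      ∫ p, ∫ θ, ∫ θ',
        (if g (θ, p.1) ≠ g (θ', p.1) then (1 : ℝ) else 0) ∂Q' ∂Q ∂ν := by
  have hrisk :
      Integrable (fun p => ∫ θ', (if g (θ', p.1) ≠ p.2 then (1 : ℝ) else 0) ∂Q') ν :=
    (integrable_ite_one_zero (μ := ν.prod Q') (P := fun q => g (q.2, q.1.1) ≠ q.1.2)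
      (measurableSet_eq_fun (by fun_prop) (by fun_prop)).compl).integral_prod_left
  have hdis : Integrable (fun p => ∫ θ, ∫ θ',
      (if g (θ, p.1) ≠ g (θ', p.1) then (1 : ℝ) else 0) ∂Q' ∂Q) ν :=
    (integrable_ite_one_zero (μ := (ν.prod Q).prod Q')
      (P := fun q => g (q.1.2, q.1.1.1) ≠ g (q.2, q.1.1.1))
      (measurableSet_eq_fun (by fun_prop) (by fun_prop)).compl)
      |>.integral_prod_left.integral_prod_left
  refine integral_mono_ae hrisk hdis ?_
  filter_upwards [hmaj] with p hp
  exact integral_ne_le_integral_integral_ne_of_eq_iSup Q (by fun_prop) hp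

/-- First part of the proof of Lemma 2: if for `ν`-almost every `(x,y)` the
label `y` attains the maximal `Q'`-probability of being predicted at `x`, then
the Gibbs risk of `Q'` under `ν` is bounded by the expected decision boundary
disagreement between `Q` and `Q'`. -/
theorem gibbs_risk_le_disagreement_of_ae_majority
    {α Θ : Type*} [MeasurableSpace α] [MeasurableSpace Θ]
    {k : ℕ} (hk : 2 ≤ k)
    (ν : Measure (α × Fin k)) [IsProbabilityMeasure ν]
    (Q Q' : Measure Θ) [IsProbabilityMeasure Q] [IsProbabilityMeasure Q']
    (g : Θ × α → Fin k) (hg : Measurable g)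
    (hmaj : ∀ᵐ p ∂ν,
      Q' {θ | g (θ, p.1) = p.2} = ⨆ i : Fin k, Q' {θ | g (θ, p.1) = i}) :
    (∫ p, ∫ θ', (if g (θ', p.1) ≠ p.2 then (1 : ℝ) else 0) ∂Q' ∂ν) ≤
      ∫ p, ∫ θ, ∫ θ',
        (if g (θ, p.1) ≠ g (θ', p.1) then (1 : ℝ) else 0) ∂Q' ∂Q ∂ν :=
  gibbs_risk_le_disagreement_of_ae_majority_general ν Q Q' g hg hmaj
end
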